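/- For the vector field X associated to u̇ = -v + h, v̇ = u + h, ẇ = -w + h with h(u,v,w) = (1/2)u² + a₂v² + (-a₂ - 1/2)w² + (2a₂ - 1)uv - 2a₂uw + vw, the polynomial F(u,v,w) = -2w + (u-w)² + 2a₂(v-w)² satisfies XF = -F. -/

import Mathlib

/-! Since `F = -2w + Q(u - w, v - w)` with `Q` quadratic, the partial derivatives of `F` sum to
`-2`, so the `h`-components of `X` contribute `-2h` to `XF`. What remains is the quadratic
identity `-v F_u + u F_v - w F_w - 2h = -F`. -/

noncomputable def h3 (a₂ u v w : ℝ) : ℝ :=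
  (1/2)*u^2 + a₂*v^2 + (-a₂ - 1/2)*w^2 + (2*a₂ - 1)*u*v - 2*a₂*u*w + v*w

noncomputable def F3 (a₂ u v w : ℝ) : ℝ :=
  -2*w + (u - w)^2 + 2*a₂*(v - w)^2

theorem hasDerivAt_F3_fst (a₂ u v w : ℝ) :
    HasDerivAt (fun s => F3 a₂ s v w) (2 * (u - w)) u := by
  have hu := ((hasDerivAt_id' u).sub_const w).fun_pow 2
  exact ((hu.const_add (-2 * w)).add_const (2 * a₂ * (v - w) ^ 2)).congr_deriv (by norm_num)

theorem hasDerivAt_F3_snd (a₂ u v w : ℝ) :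
    HasDerivAt (fun s => F3 a₂ u s w) (4 * a₂ * (v - w)) v := by
  have hv := (((hasDerivAt_id' v).sub_const w).fun_pow 2).const_mul (2 * a₂)
  exact (hv.const_add (-2 * w + (u - w) ^ 2)).congr_deriv (by norm_num; ring)

theorem hasDerivAt_F3_thd (a₂ u v w : ℝ) :
    HasDerivAt (fun s => F3 a₂ u v s) (-2 - 2 * (u - w) - 4 * a₂ * (v - w)) w := by
  have hu := ((hasDerivAt_id' w).const_sub u).fun_pow 2
  have hv := (((hasDerivAt_id' w).const_sub v).fun_pow 2).const_mul (2 * a₂)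
  exact ((((hasDerivAt_id' w).const_mul (-2)).add hu).add hv).congr_deriv (by norm_num; ring)

/-- F = 0 is an invariant algebraic surface with cofactor -1. -/
theorem stmt_3 : ∀ a₂ u v w : ℝ,
    (-v + h3 a₂ u v w) * deriv (fun s => F3 a₂ s v w) u
    + (u + h3 a₂ u v w) * deriv (fun s => F3 a₂ u s w) v
    + (-w + h3 a₂ u v w) * deriv (fun s => F3 a₂ u v s) w
    = -F3 a₂ u v w := by
  intro a₂ u v w
  rw [(hasDerivAt_F3_fst a₂ u v w).deriv, (hasDerivAt_F3_snd a₂ u v w).deriv,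
    (hasDerivAt_F3_thd a₂ u v w).deriv]
  unfold h3 F3
  ring
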